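/- arXiv:2403.15561 — 9 statements merged into one kernel-verified Lean document; each statement's English description precedes it below -/
import Mathlib

section
/- Let F be a field, m ≥ 1, and x ∈ M_{2m}(F); put a = x + σ(x) ∈ Symd(σ). Then the coefficient of X^{m−1} in the reduced Pfaffian polynomial Prp_a equals −trace(x); equivalently, Trp(a) = trace(x). (Split-matrix case of the first formula of Lemma 1.) -/
open Polynomial Matrix

/-- The standard symplectic matrix: block diagonal with `m` copies of `[[0,1],[-1,0]]`. -/
def sympJ (F : Type*) [Field F] (m : ℕ) : Matrix (Fin (2 * m)) (Fin (2 * m)) F :=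
  Matrix.of fun i j =>
    if i.val % 2 = 0 ∧ j.val = i.val + 1 then (1 : F)
    else if i.val % 2 = 1 ∧ i.val = j.val + 1 then (-1 : F)
    else 0

/-- The standard symplectic involution `σ(x) = J⁻¹ * xᵀ * J` on `M_{2m}(F)`. -/
noncomputable def sympInv (F : Type*) [Field F] (m : ℕ)
    (x : Matrix (Fin (2 * m)) (Fin (2 * m)) F) : Matrix (Fin (2 * m)) (Fin (2 * m)) F :=
  (sympJ F m)⁻¹ * xᵀ * sympJ F m

namespace SympAux

/-- the partner function: `2k ↦ 2k+1`, `2k+1 ↦ 2k`. -/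
def ptf (m : ℕ) (i : Fin (2 * m)) : Fin (2 * m) :=
  ⟨if i.val % 2 = 0 then i.val + 1 else i.val - 1, by have := i.2; split <;> omega⟩

lemma ptf_ptf (m : ℕ) (i : Fin (2 * m)) : ptf m (ptf m i) = i := by
  have := i.2
  apply Fin.ext
  simp only [ptf]
  split_ifs <;> omega

/-- the partner permutation. -/
def ptp (m : ℕ) : Equiv.Perm (Fin (2 * m)) := ⟨ptf m, ptf m, ptf_ptf m, ptf_ptf m⟩

lemma ptp_ptp (m : ℕ) (i : Fin (2 * m)) : ptp m (ptp m i) = i := ptf_ptf m i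

lemma ptp_mul_self (m : ℕ) : ptp m * ptp m = 1 := by
  ext i
  exact congrArg Fin.val (ptp_ptp m i)

lemma ptp_inv (m : ℕ) : (ptp m)⁻¹ = ptp m := by
  rfl

lemma ptp_ne (m : ℕ) (i : Fin (2 * m)) : ptp m i ≠ i := by
  intro h
  have h' := congrArg Fin.val h
  have := i.2
  simp only [ptp, ptf, Equiv.coe_fn_mk] at h'
  split_ifs at h' <;> omega

lemma ptp_val_even (m : ℕ) (i : Fin (2 * m)) (h : i.val % 2 = 0) :
    (ptp m i).val = i.val + 1 := by
  simp [ptp, ptf, h]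

lemma ptp_val_odd (m : ℕ) (i : Fin (2 * m)) (h : i.val % 2 = 1) :
    (ptp m i).val = i.val - 1 := by
  simp only [ptp, ptf, Equiv.coe_fn_mk]
  split_ifs <;> omega

lemma ptp_parity (m : ℕ) (i : Fin (2 * m)) (h : i.val % 2 = 0) :
    (ptp m i).val % 2 = 1 := by
  rw [ptp_val_even m i h]; omega

variable {F : Type*} [Field F] {m : ℕ}

/-- sign of an index. -/
def eps (F : Type*) [Field F] {m : ℕ} (i : Fin (2 * m)) : F :=
  if i.val % 2 = 0 then 1 else -1

lemma eps_ptp (i : Fin (2 * m)) : eps F (ptp m i) = -eps F i := by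
  have := i.2
  simp only [eps, ptp, ptf, Equiv.coe_fn_mk]
  split_ifs <;> first | (exfalso; omega) | norm_num

lemma eps_mul_self (i : Fin (2 * m)) : eps F i * eps F i = 1 := by
  simp only [eps]; split_ifs <;> norm_num

lemma sympJ_apply (i j : Fin (2 * m)) :
    sympJ F m i j = if j = ptp m i then eps F i else 0 := by
  have hi := i.2
  have hj := j.2
  simp only [sympJ, Matrix.of_apply, eps, ptp, ptf, Equiv.coe_fn_mk, Fin.ext_iff]
  split_ifs <;> first | rfl | omega

lemma negJ_mul_J : (-(sympJ F m)) * sympJ F m = 1 := by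
  ext i j
  rw [Matrix.mul_apply]
  rw [Finset.sum_eq_single (ptp m i)]
  · rw [Matrix.neg_apply, sympJ_apply, if_pos rfl, sympJ_apply, ptp_ptp]
    rcases eq_or_ne j i with rfl | h
    · rw [if_pos rfl, Matrix.one_apply_eq, eps_ptp, neg_mul, mul_neg, neg_neg,
        eps_mul_self]
    · rw [if_neg h, Matrix.one_apply_ne' h, mul_zero]
  · intro b _ hb
    rw [Matrix.neg_apply, sympJ_apply, if_neg hb, neg_zero, zero_mul]
  · intro h
    exact absurd (Finset.mem_univ _) h

lemma sympJ_inv : (sympJ F m)⁻¹ = -(sympJ F m) :=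
  Matrix.inv_eq_left_inv negJ_mul_J

lemma sympInv_apply (x : Matrix (Fin (2 * m)) (Fin (2 * m)) F) (i j : Fin (2 * m)) :
    sympInv F m x i j = eps F i * eps F j * x (ptp m j) (ptp m i) := by
  rw [sympInv, sympJ_inv, Matrix.mul_apply]
  rw [Finset.sum_eq_single (ptp m j)]
  · rw [Matrix.mul_apply]
    rw [Finset.sum_eq_single (ptp m i)]
    · rw [Matrix.neg_apply, sympJ_apply, if_pos rfl, sympJ_apply, ptp_ptp, if_pos rfl,
        Matrix.transpose_apply, eps_ptp]
      ring
    · intro b _ hb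
      rw [Matrix.neg_apply, sympJ_apply, if_neg hb, neg_zero, zero_mul]
    · intro h; exact absurd (Finset.mem_univ _) h
  · intro b _ hb
    rw [sympJ_apply]
    rw [if_neg (by intro h; exact hb (by rw [h, ptp_ptp])), mul_zero]
  · intro h; exact absurd (Finset.mem_univ _) h

variable (x : Matrix (Fin (2 * m)) (Fin (2 * m)) F)

lemma a_diag (i : Fin (2 * m)) :
    (x + sympInv F m x) i i = x i i + x (ptp m i) (ptp m i) := by
  rw [Matrix.add_apply, sympInv_apply, eps_mul_self, one_mul]

lemma a_diag_ptp (i : Fin (2 * m)) :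
    (x + sympInv F m x) (ptp m i) (ptp m i) = (x + sympInv F m x) i i := by
  rw [a_diag, a_diag, ptp_ptp, add_comm]

lemma a_offblock (i : Fin (2 * m)) : (x + sympInv F m x) i (ptp m i) = 0 := by
  rw [Matrix.add_apply, sympInv_apply, ptp_ptp, eps_ptp]
  rw [show eps F i * -eps F i = -1 by rw [mul_neg, eps_mul_self]]
  ring

lemma trace_sympInv : (sympInv F m x).trace = x.trace := by
  rw [Matrix.trace, Matrix.trace, ← Equiv.sum_comp (ptp m) (fun i => x.diag i)]
  exact Finset.sum_congr rfl fun i _ => by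
    simp [Matrix.diag_apply, sympInv_apply, eps_mul_self]

section CharTwoAux

variable [CharP F 2]

lemma eps_char2 (i : Fin (2 * m)) : eps F i = 1 := by
  rw [eps]
  split_ifs
  · rfl
  · exact CharTwo.neg_eq 1

lemma a_conj (u v : Fin (2 * m)) :
    (x + sympInv F m x) (ptp m u) (ptp m v) = (x + sympInv F m x) v u := by
  simp only [Matrix.add_apply, sympInv_apply, eps_char2, one_mul, ptp_ptp]
  exact add_comm _ _

lemma cm_conj (u v : Fin (2 * m)) :
    charmatrix (x + sympInv F m x) (ptp m u) (ptp m v)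
      = charmatrix (x + sympInv F m x) v u := by
  rcases eq_or_ne u v with rfl | h
  · rw [charmatrix_apply_eq, charmatrix_apply_eq, a_conj]
  · rw [charmatrix_apply_ne _ _ _ (fun hh => h ((ptp m).injective hh)),
      charmatrix_apply_ne _ _ _ (Ne.symm h), a_conj]

lemma term_conj (σ : Equiv.Perm (Fin (2 * m))) :
    ∏ i, charmatrix (x + sympInv F m x) ((ptp m * σ * ptp m) i) i
      = ∏ i, charmatrix (x + sympInv F m x) (σ⁻¹ i) i := by
  set a := x + sympInv F m x with ha
  calc ∏ i, charmatrix a ((ptp m * σ * ptp m) i) i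
      = ∏ i, charmatrix a ((ptp m * σ * ptp m) (ptp m i)) (ptp m i) :=
        (Equiv.prod_comp (ptp m) fun i => charmatrix a ((ptp m * σ * ptp m) i) i).symm
    _ = ∏ i, charmatrix a (ptp m (σ i)) (ptp m i) := by
        refine Finset.prod_congr rfl fun i _ => ?_
        simp only [Equiv.Perm.mul_apply, ptp_ptp]
    _ = ∏ i, charmatrix a i (σ i) :=
        Finset.prod_congr rfl fun i _ => cm_conj x (σ i) i
    _ = ∏ i, charmatrix a (σ⁻¹ i) i := by
        rw [← Equiv.prod_comp σ⁻¹ (fun i => charmatrix a i (σ i))]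
        exact Finset.prod_congr rfl fun i _ => by
          rw [show σ (σ⁻¹ i) = i from σ.apply_symm_apply i]

end CharTwoAux

lemma sign_conj (σ : Equiv.Perm (Fin (2 * m))) :
    Equiv.Perm.sign (ptp m * σ * ptp m) = Equiv.Perm.sign σ := by
  rw [_root_.map_mul, _root_.map_mul]
  rcases Int.units_eq_one_or (Equiv.Perm.sign (ptp m)) with h | h <;> rw [h]
  · group
  · rw [neg_one_mul, mul_neg_one, neg_neg]

lemma coeff_term_zero (σ : Equiv.Perm (Fin (2 * m))) (h1 : σ ≠ 1) (h2 : ¬σ.IsSwap) :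
    (∏ i, charmatrix (x + sympInv F m x) (σ i) i).coeff (2 * m - 2) = 0 := by
  set a := x + sympInv F m x with ha
  have hcard : 3 ≤ σ.support.card := by
    have h0 : σ.support.card ≠ 0 := fun hc =>
      h1 (by rwa [Finset.card_eq_zero, Equiv.Perm.support_eq_empty_iff] at hc)
    have hne1 := σ.card_support_ne_one
    have hne2 : σ.support.card ≠ 2 := fun hc => h2 (Equiv.Perm.card_support_eq_two.mp hc)
    omega
  have hle : σ.support.card ≤ 2 * m := le_trans (Finset.card_le_univ _) (by simp)
  apply Polynomial.coeff_eq_zero_of_natDegree_lt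
  have hA : (∏ i ∈ σ.support, charmatrix a (σ i) i).natDegree ≤ 0 := by
    refine le_trans (Polynomial.natDegree_prod_le _ _) (le_of_eq (Finset.sum_eq_zero ?_))
    intro i hi
    rw [charmatrix_apply_ne _ _ _ (Equiv.Perm.mem_support.mp hi), natDegree_neg, natDegree_C]
  have hB : (∏ i ∈ σ.supportᶜ, charmatrix a (σ i) i).natDegree ≤ σ.supportᶜ.card := by
    refine le_trans (Polynomial.natDegree_prod_le _ _) ?_
    refine le_trans (Finset.sum_le_card_nsmul _ _ 1 ?_) (by simp)
    intro i hi
    have hfix : σ i = i := by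
      have := Finset.mem_compl.mp hi
      rwa [Equiv.Perm.notMem_support] at this
    rw [hfix, charmatrix_apply_eq]
    exact natDegree_X_sub_C_le _
  have hmul := Polynomial.natDegree_mul_le
    (p := ∏ i ∈ σ.support, charmatrix a (σ i) i)
    (q := ∏ i ∈ σ.supportᶜ, charmatrix a (σ i) i)
  rw [Finset.prod_mul_prod_compl] at hmul
  have hc : σ.supportᶜ.card = 2 * m - σ.support.card := by
    rw [Finset.card_compl, Fintype.card_fin]
  omega

lemma coeff_term_swap (u v : Fin (2 * m)) (huv : u ≠ v) :
    (∏ i, charmatrix (x + sympInv F m x) ((Equiv.swap u v) i) i).coeff (2 * m - 2)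
      = (x + sympInv F m x) u v * (x + sympInv F m x) v u := by
  set a := x + sympInv F m x with ha
  have hcompl : ({u, v} : Finset (Fin (2 * m)))ᶜ.card = 2 * m - 2 := by
    rw [Finset.card_compl, Finset.card_pair huv, Fintype.card_fin]
  have hQmonic : (∏ i ∈ ({u, v} : Finset (Fin (2 * m)))ᶜ, (X - C (a i i))).Monic :=
    monic_prod_of_monic _ _ fun i _ => monic_X_sub_C _
  have hQdeg : (∏ i ∈ ({u, v} : Finset (Fin (2 * m)))ᶜ, (X - C (a i i))).natDegree
      = 2 * m - 2 := by
    rw [Polynomial.natDegree_prod_of_monic _ _ fun i _ => monic_X_sub_C _]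
    simp only [natDegree_X_sub_C, Finset.sum_const, smul_eq_mul, mul_one, hcompl]
  rw [← Finset.prod_mul_prod_compl ({u, v} : Finset (Fin (2 * m)))]
  have h1 : ∏ i ∈ ({u, v} : Finset (Fin (2 * m))), charmatrix a ((Equiv.swap u v) i) i
      = C (a u v * a v u) := by
    rw [Finset.prod_pair huv, Equiv.swap_apply_left, Equiv.swap_apply_right,
      charmatrix_apply_ne _ _ _ (Ne.symm huv), charmatrix_apply_ne _ _ _ huv,
      neg_mul_neg, ← C_mul, mul_comm (a v u)]
  have h2 : ∏ i ∈ ({u, v} : Finset (Fin (2 * m)))ᶜ, charmatrix a ((Equiv.swap u v) i) i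
      = ∏ i ∈ ({u, v} : Finset (Fin (2 * m)))ᶜ, (X - C (a i i)) := by
    refine Finset.prod_congr rfl fun i hi => ?_
    rw [Finset.mem_compl, Finset.mem_insert, Finset.mem_singleton] at hi
    push_neg at hi
    rw [Equiv.swap_apply_of_ne_of_ne hi.1 hi.2, charmatrix_apply_eq]
  rw [h1, h2, coeff_C_mul, ← hQdeg, Monic.coeff_natDegree hQmonic, mul_one]

lemma coeff_term_one (hm : 1 ≤ m) :
    (∏ i, charmatrix (x + sympInv F m x) i i).coeff (2 * m - 2)
      = ∑ t ∈ Finset.powersetCard 2 (Finset.univ : Finset (Fin (2 * m))),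
          ∏ i ∈ t, (x + sympInv F m x) i i := by
  set a := x + sympInv F m x with ha
  have h1 : ∀ i : Fin (2 * m), charmatrix a i i = X + C (-(a i i)) := fun i => by
    rw [charmatrix_apply_eq, map_neg, sub_eq_add_neg]
  simp_rw [h1]
  have hcard : (Finset.univ : Finset (Fin (2 * m))).card = 2 * m := by simp
  have hle : 2 * m - 2 ≤ (Finset.univ : Finset (Fin (2 * m))).card := by omega
  rw [Finset.prod_X_add_C_coeff _ _ hle]
  have h2 : (Finset.univ : Finset (Fin (2 * m))).card - (2 * m - 2) = 2 := by omega
  rw [h2]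
  refine Finset.sum_congr rfl fun t ht => ?_
  obtain ⟨i, j, hij, rfl⟩ := Finset.card_eq_two.mp (Finset.mem_powersetCard.mp ht).2
  rw [Finset.prod_pair hij, Finset.prod_pair hij, neg_mul_neg]

section CharTwoMain

variable [CharP F 2]

lemma sum_powersetCard_two :
    ∑ t ∈ Finset.powersetCard 2 (Finset.univ : Finset (Fin (2 * m))),
        ∏ i ∈ t, (x + sympInv F m x) i i = x.trace ^ 2 := by
  classical
  set a := x + sympInv F m x with ha
  rw [← Finset.sum_filter_add_sum_filter_not (Finset.powersetCard 2 Finset.univ)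
    (fun t => t.image (ptp m) = t)]
  have hpart2 : ∑ t ∈ (Finset.powersetCard 2 (Finset.univ : Finset (Fin (2 * m)))).filter
      (fun t => ¬ t.image (ptp m) = t), ∏ i ∈ t, a i i = 0 := by
    have himgimg : ∀ t : Finset (Fin (2 * m)), (t.image (ptp m)).image (ptp m) = t := by
      intro t
      rw [Finset.image_image, show ((ptp m) ∘ (ptp m) : Fin (2 * m) → Fin (2 * m)) = id from
        funext (ptp_ptp m), Finset.image_id]
    apply Finset.sum_involution (fun t _ => t.image (ptp m))
    · intro t _
      have : ∏ i ∈ t.image (ptp m), a i i = ∏ i ∈ t, a i i := by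
        rw [Finset.prod_image (fun i _ j _ h => (ptp m).injective h)]
        exact Finset.prod_congr rfl fun i _ => a_diag_ptp x i
      rw [this]
      exact CharTwo.add_self_eq_zero _
    · intro t ht _
      exact (Finset.mem_filter.mp ht).2
    · intro t _
      exact himgimg t
    · intro t ht
      rw [Finset.mem_filter] at ht
      obtain ⟨hmem, hnp⟩ := ht
      rw [Finset.mem_filter]
      refine ⟨Finset.mem_powersetCard.mpr ⟨Finset.subset_univ _, ?_⟩, ?_⟩
      · rw [Finset.card_image_of_injective _ (ptp m).injective,
          (Finset.mem_powersetCard.mp hmem).2]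
      · intro hcontr
        rw [himgimg t] at hcontr
        exact hnp hcontr.symm
  have hpart1 : ∑ t ∈ (Finset.powersetCard 2 (Finset.univ : Finset (Fin (2 * m)))).filter
      (fun t => t.image (ptp m) = t), ∏ i ∈ t, a i i
      = ∑ i ∈ Finset.univ.filter (fun i : Fin (2 * m) => i.val % 2 = 0), (a i i) ^ 2 := by
    refine (Finset.sum_bij (fun i _ => ({i, ptp m i} : Finset (Fin (2 * m)))) ?_ ?_ ?_ ?_).symm
    · intro i _
      rw [Finset.mem_filter]
      constructor
      · rw [Finset.mem_powersetCard]
        exact ⟨Finset.subset_univ _, Finset.card_pair (Ne.symm (ptp_ne m i))⟩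
      · show ({i, ptp m i} : Finset (Fin (2 * m))).image (ptp m) = {i, ptp m i}
        rw [Finset.image_insert, Finset.image_singleton, ptp_ptp, Finset.pair_comm]
    · intro i hi j hj hij
      have hi' := (Finset.mem_filter.mp hi).2
      have hj' := (Finset.mem_filter.mp hj).2
      have hij' : ({i, ptp m i} : Finset (Fin (2 * m))) = {j, ptp m j} := hij
      have hmem : i ∈ ({j, ptp m j} : Finset (Fin (2 * m))) := by
        rw [← hij']
        exact Finset.mem_insert_self i {ptp m i}
      rcases Finset.mem_insert.mp hmem with h | h
      · exact h
      · exfalso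
        have heq := Finset.mem_singleton.mp h
        have hodd := ptp_parity m j hj'
        rw [← heq] at hodd
        omega
    · intro t ht
      rw [Finset.mem_filter] at ht
      obtain ⟨u, v, huv, rfl⟩ := Finset.card_eq_two.mp (Finset.mem_powersetCard.mp ht.1).2
      have hpu : ptp m u = v := by
        have hmem : ptp m u ∈ ({u, v} : Finset (Fin (2 * m))) := by
          rw [← ht.2]
          exact Finset.mem_image_of_mem _ (Finset.mem_insert_self _ _)
        rcases Finset.mem_insert.mp hmem with h | h
        · exact absurd h (ptp_ne m u)
        · exact Finset.mem_singleton.mp h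
      rcases Nat.mod_two_eq_zero_or_one u.val with hu | hu
      · refine ⟨u, Finset.mem_filter.mpr ⟨Finset.mem_univ _, hu⟩, ?_⟩
        show ({u, ptp m u} : Finset (Fin (2 * m))) = {u, v}
        rw [hpu]
      · refine ⟨v, Finset.mem_filter.mpr ⟨Finset.mem_univ _, ?_⟩, ?_⟩
        · have h1 := ptp_val_odd m u hu
          rw [← hpu]
          show (ptp m u).val % 2 = 0
          have h2 := ptp_val_even m u
          have h3 := ptp_val_odd m u
          omega
        · show ({v, ptp m v} : Finset (Fin (2 * m))) = {u, v}
          rw [← hpu, ptp_ptp]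
          exact Finset.pair_comm _ _
    · intro i _
      show a i i ^ 2 = ∏ l ∈ ({i, ptp m i} : Finset (Fin (2 * m))), a l l
      rw [Finset.prod_pair (Ne.symm (ptp_ne m i)),
        show a (ptp m i) (ptp m i) = a i i from a_diag_ptp x i, sq]
  rw [hpart1, hpart2, add_zero]
  have h3 : ∀ i : Fin (2 * m), (a i i) ^ 2 = x i i ^ 2 + x (ptp m i) (ptp m i) ^ 2 := fun i => by
    rw [show a i i = x i i + x (ptp m i) (ptp m i) from a_diag x i, CharTwo.add_sq]
  simp_rw [h3]
  rw [Finset.sum_add_distrib]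
  have h4 : ∑ i ∈ Finset.univ.filter (fun i : Fin (2 * m) => i.val % 2 = 0),
      x (ptp m i) (ptp m i) ^ 2
      = ∑ i ∈ Finset.univ.filter (fun i : Fin (2 * m) => ¬ i.val % 2 = 0), x i i ^ 2 := by
    refine Finset.sum_nbij' (fun i => ptp m i) (fun i => ptp m i) ?_ ?_ ?_ ?_ ?_
    · intro i hi
      have hi' := (Finset.mem_filter.mp hi).2
      rw [Finset.mem_filter]
      refine ⟨Finset.mem_univ _, ?_⟩
      show ¬ (ptp m i).val % 2 = 0
      have := ptp_parity m i hi'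
      omega
    · intro i hi
      have hi' := (Finset.mem_filter.mp hi).2
      rw [Finset.mem_filter]
      refine ⟨Finset.mem_univ _, ?_⟩
      show (ptp m i).val % 2 = 0
      have h1 : i.val % 2 = 1 := by omega
      have := ptp_val_odd m i h1
      omega
    · intro i _
      exact ptp_ptp m i
    · intro i _
      exact ptp_ptp m i
    · intro i _
      rfl
  rw [h4, Finset.sum_filter_add_sum_filter_not]
  show _ = (∑ i, x.diag i) ^ 2
  rw [CharTwo.sum_sq]
  rfl

lemma charpoly_coeff_char2 (hm : 1 ≤ m) :
    ((x + sympInv F m x).charpoly).coeff (2 * m - 2) = x.trace ^ 2 := by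
  classical
  set a := x + sympInv F m x with ha
  have hstep : (a.charpoly).coeff (2 * m - 2)
      = ∑ σ : Equiv.Perm (Fin (2 * m)), ((Equiv.Perm.sign σ : ℤ) : F)
          * (∏ i, charmatrix a (σ i) i).coeff (2 * m - 2) := by
    rw [Matrix.charpoly, Matrix.det_apply', Polynomial.finset_sum_coeff]
    refine Finset.sum_congr rfl fun σ _ => ?_
    rw [← Polynomial.C_eq_intCast, Polynomial.coeff_C_mul]
  rw [hstep]
  rw [← Finset.add_sum_erase _ _ (Finset.mem_univ (1 : Equiv.Perm (Fin (2 * m))))]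
  have hone : ((Equiv.Perm.sign (1 : Equiv.Perm (Fin (2 * m))) : ℤ) : F)
      * (∏ i, charmatrix a ((1 : Equiv.Perm (Fin (2 * m))) i) i).coeff (2 * m - 2)
      = x.trace ^ 2 := by
    simp only [Equiv.Perm.sign_one, Units.val_one, Int.cast_one, one_mul,
      Equiv.Perm.one_apply]
    rw [coeff_term_one x hm, sum_powersetCard_two x]
  rw [hone]
  have hrest : ∑ σ ∈ (Finset.univ : Finset (Equiv.Perm (Fin (2 * m)))).erase 1,
      ((Equiv.Perm.sign σ : ℤ) : F) * (∏ i, charmatrix a (σ i) i).coeff (2 * m - 2) = 0 := by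
    rw [← Finset.sum_filter_add_sum_filter_not _ (fun σ => σ.IsSwap)]
    have hns : ∑ σ ∈ ((Finset.univ : Finset (Equiv.Perm (Fin (2 * m)))).erase 1).filter
        (fun σ => ¬ σ.IsSwap),
        ((Equiv.Perm.sign σ : ℤ) : F) * (∏ i, charmatrix a (σ i) i).coeff (2 * m - 2) = 0 :=
      Finset.sum_eq_zero fun σ hσ => by
        rw [Finset.mem_filter, Finset.mem_erase] at hσ
        rw [coeff_term_zero x σ hσ.1.1 hσ.2, mul_zero]
    have hgg : ∀ τ : Equiv.Perm (Fin (2 * m)), ptp m * (ptp m * τ * ptp m) * ptp m = τ := by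
      intro τ
      have : ptp m * (ptp m * τ * ptp m) * ptp m
          = (ptp m * ptp m) * τ * (ptp m * ptp m) := by group
      rw [this, ptp_mul_self, one_mul, mul_one]
    have hsw : ∑ σ ∈ ((Finset.univ : Finset (Equiv.Perm (Fin (2 * m)))).erase 1).filter
        (fun σ => σ.IsSwap),
        ((Equiv.Perm.sign σ : ℤ) : F) * (∏ i, charmatrix a (σ i) i).coeff (2 * m - 2) = 0 := by
      apply Finset.sum_involution (fun σ _ => ptp m * σ * ptp m)
      · intro σ hσ
        rw [Finset.mem_filter, Finset.mem_erase] at hσ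
        have hinv : σ⁻¹ = σ := by
          obtain ⟨u, v, huv, rfl⟩ := hσ.2
          exact Equiv.swap_inv u v
        have hval : ((Equiv.Perm.sign (ptp m * σ * ptp m) : ℤ) : F)
            * (∏ i, charmatrix a ((ptp m * σ * ptp m) i) i).coeff (2 * m - 2)
            = ((Equiv.Perm.sign σ : ℤ) : F)
              * (∏ i, charmatrix a (σ i) i).coeff (2 * m - 2) := by
          rw [sign_conj, term_conj, hinv]
        rw [hval]
        exact CharTwo.add_self_eq_zero _
      · intro σ hσ hfne
        rw [Finset.mem_filter] at hσ
        obtain ⟨u, v, huv, hσeq⟩ := hσ.2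
        intro hcontr
        apply hfne
        have hvu : v = ptp m u := by
          rcases eq_or_ne (ptp m u) v with h | h
          · exact h.symm
          · exfalso
            have hfix : σ (ptp m u) = ptp m u := by
              rw [hσeq]
              exact Equiv.swap_apply_of_ne_of_ne (ptp_ne m u) h
            have happ : ptp m (σ (ptp m u)) = σ u := by
              have := congrArg (fun τ : Equiv.Perm (Fin (2 * m)) => τ u) hcontr
              simpa [Equiv.Perm.mul_apply] using this
            rw [hfix, ptp_ptp, hσeq, Equiv.swap_apply_left] at happ
            exact huv happ
        rw [hσeq, coeff_term_swap x u v huv]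
        rw [show (x + sympInv F m x) u v = 0 from hvu ▸ a_offblock x u, zero_mul, mul_zero]
      · intro σ hσ
        rw [Finset.mem_filter, Finset.mem_erase] at hσ ⊢
        obtain ⟨⟨hne1, _⟩, hsw⟩ := hσ
        obtain ⟨u, v, huv, rfl⟩ := hsw
        have hconj : ptp m * Equiv.swap u v * ptp m = Equiv.swap (ptp m u) (ptp m v) := by
          rw [Equiv.swap_apply_apply, ptp_inv]
        refine ⟨⟨?_, Finset.mem_univ _⟩, ?_⟩
        · rw [hconj]
          simp only [ne_eq, Equiv.swap_eq_one_iff]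
          exact fun h => huv ((ptp m).injective h)
        · exact ⟨ptp m u, ptp m v, fun h => huv ((ptp m).injective h), hconj⟩
      · intro σ _
        exact hgg σ
    rw [hns, hsw, add_zero]
  rw [hrest, add_zero]


end CharTwoMain

end SympAux

/-- For `a = x + σ(x)`, the coefficient of `X^(m-1)` in the reduced Pfaffian polynomial
`Prp_a` (the unique monic polynomial of degree `m` whose square is the characteristic
polynomial of `a`) equals `-trace x`; that is, `Trp(a) = trace x`. -/
theorem stmt1 (F : Type*) [Field F] (m : ℕ) (hm : 1 ≤ m)
    (x : Matrix (Fin (2 * m)) (Fin (2 * m)) F) (p : F[X])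
    (hmonic : p.Monic) (hdeg : p.natDegree = m)
    (hsq : p ^ 2 = (x + sympInv F m x).charpoly) :
    p.coeff (m - 1) = - x.trace := by
  classical
  have htr : (x + sympInv F m x).trace = x.trace + x.trace := by
    rw [Matrix.trace_add, SympAux.trace_sympInv]
  have hndeg : (p ^ 2).natDegree = 2 * m := by
    rw [hmonic.natDegree_pow, hdeg]
  have hkey2 : p.coeff (m - 1) + p.coeff (m - 1) = -x.trace + -x.trace := by
    have h1 : (p ^ 2).nextCoeff = p.nextCoeff + p.nextCoeff := by
      rw [pow_two]
      exact Polynomial.Monic.nextCoeff_mul hmonic hmonic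
    have h2 : p.nextCoeff = p.coeff (m - 1) := by
      rw [Polynomial.nextCoeff_of_natDegree_pos (by omega), hdeg]
    have h3 : (p ^ 2).nextCoeff = (p ^ 2).coeff (2 * m - 1) := by
      rw [Polynomial.nextCoeff_of_natDegree_pos (by omega), hndeg]
    have h4 : (p ^ 2).coeff (2 * m - 1) = -(x + sympInv F m x).trace := by
      rw [hsq]
      haveI : Nonempty (Fin (2 * m)) := ⟨⟨0, by omega⟩⟩
      have h5 := Matrix.trace_eq_neg_charpoly_coeff (x + sympInv F m x)
      rw [Fintype.card_fin] at h5
      rw [← neg_neg ((x + sympInv F m x).charpoly.coeff (2 * m - 1)), ← h5]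
    rw [← h2, ← h1, h3, h4, htr, neg_add]
  by_cases h2 : (2 : F) = 0
  · haveI : CharP F 2 := CharTwo.of_one_ne_zero_of_two_eq_zero one_ne_zero h2
    haveI : Fact (Nat.Prime 2) := ⟨Nat.prime_two⟩
    have hc2 : ((x + sympInv F m x).charpoly).coeff (2 * m - 2) = x.trace ^ 2 :=
      SympAux.charpoly_coeff_char2 x hm
    have hfr : ((x + sympInv F m x).charpoly).coeff (2 * m - 2) = (p.coeff (m - 1)) ^ 2 := by
      rw [← hsq, ← Polynomial.map_frobenius_expand 2 p, Polynomial.coeff_map,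
        Polynomial.coeff_expand (by norm_num : 0 < 2),
        if_pos (by omega : 2 ∣ 2 * m - 2)]
      rw [show (2 * m - 2) / 2 = m - 1 by omega]
      rfl
    have hct : (p.coeff (m - 1)) ^ 2 = (-x.trace) ^ 2 := by
      rw [neg_sq, ← hc2, hfr]
    have hz : (p.coeff (m - 1) - -x.trace) ^ 2 = 0 := by
      calc (p.coeff (m - 1) - -x.trace) ^ 2
          = (p.coeff (m - 1)) ^ 2 + (-x.trace) ^ 2 - 2 * (p.coeff (m - 1) * -x.trace) := by
            ring
        _ = (-x.trace) ^ 2 + (-x.trace) ^ 2 - 2 * (p.coeff (m - 1) * -x.trace) := by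
            rw [hct]
        _ = 2 * ((-x.trace) ^ 2 - p.coeff (m - 1) * -x.trace) := by ring
        _ = 0 := by rw [h2, zero_mul]
    have := pow_eq_zero_iff (two_ne_zero) |>.mp hz
    exact sub_eq_zero.mp this
  · have : (2 : F) * p.coeff (m - 1) = 2 * -x.trace := by
      rw [two_mul, two_mul]
      exact hkey2
    exact mul_left_cancel₀ h2 this
end

section
/- Let R be a commutative ring and u a 2×2 matrix over R. The characteristic polynomial of the 4×4 block matrix fromBlocks 0 u adj(u) 0 (zero blocks on the diagonal, u in the top-right block, adj(u) in the bottom-left block) equals (X² − det(u))² in R[X]. -/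
open Polynomial Matrix

/-- The characteristic polynomial of the block matrix `[[0, u], [adj u, 0]]` is
`(X² - det u)²`. -/
theorem stmt4 (R : Type*) [CommRing R] (u : Matrix (Fin 2) (Fin 2) R) :
    (Matrix.fromBlocks 0 u u.adjugate 0).charpoly
      = (X ^ 2 - C u.det) ^ 2 := by
  rw [Matrix.charpoly, ← Matrix.det_reindex_self finSumFinEquiv, Matrix.det_fin_two u]
  have e0 : (finSumFinEquiv.symm (0 : Fin 4) : Fin 2 ⊕ Fin 2) = Sum.inl 0 := rfl
  have e1 : (finSumFinEquiv.symm (1 : Fin 4) : Fin 2 ⊕ Fin 2) = Sum.inl 1 := rfl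
  have e2 : (finSumFinEquiv.symm (2 : Fin 4) : Fin 2 ⊕ Fin 2) = Sum.inr 0 := rfl
  have e3 : (finSumFinEquiv.symm (3 : Fin 4) : Fin 2 ⊕ Fin 2) = Sum.inr 1 := rfl
  have h : (Matrix.reindex finSumFinEquiv finSumFinEquiv
      ((Matrix.fromBlocks 0 u u.adjugate 0 : Matrix _ _ R).charmatrix)) =
      !![X, 0, -C (u 0 0), -C (u 0 1);
         0, X, -C (u 1 0), -C (u 1 1);
         -C (u 1 1), C (u 0 1), X, 0;
         C (u 1 0), -C (u 0 0), 0, X] := by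
    refine Matrix.ext fun i j => ?_
    fin_cases i <;> fin_cases j <;>
      simp [e0, e1, e2, e3, charmatrix_apply, Matrix.one_apply, Matrix.adjugate_fin_two,
        Fin.isValue]
  rw [h]
  simp [Matrix.det_succ_row_zero, Fin.sum_univ_succ, Fin.succAbove, Fin.castSucc,
    Fin.castAdd, Fin.castLE]
  ring
end

section
/- Let R be a commutative ring in which 2 = 0. For all 2×2 matrices A, B, C, D over R: det(A·D + C·B) + det(adj(A)·C + D·adj(B)) = (det A + det B)·(det C + det D). (This is the norm-multiplicativity identity underlying the composition map (x₁, x₂) ↦ x₁x₂ + x₂x₁ of Proposition compo, in the split case.) -/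
open Matrix

/-- Norm-multiplicativity identity underlying the composition map
`(x₁, x₂) ↦ x₁x₂ + x₂x₁` in characteristic 2:
`det(AD + CB) + det(adj(A)C + D·adj(B)) = (det A + det B)(det C + det D)`. -/
theorem stmt5 (R : Type*) [CommRing R] (h2 : (2 : R) = 0)
    (A B C D : Matrix (Fin 2) (Fin 2) R) :
    (A * D + C * B).det + (A.adjugate * C + D * B.adjugate).det
      = (A.det + B.det) * (C.det + D.det) := by
  simp only [Matrix.det_fin_two, Matrix.adjugate_fin_two, Matrix.add_apply, Matrix.mul_apply,
    Fin.sum_univ_two, Matrix.of_apply, Matrix.cons_val', Matrix.cons_val_zero, Matrix.cons_val_one,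
    Matrix.head_cons, Matrix.empty_val', Matrix.cons_val_fin_one, Matrix.head_fin_const]
  linear_combination (- (A 1 1)*(B 1 1)*(C 0 1)*(D 1 0) + (A 1 1)*(B 1 0)*(C 0 1)*(D 1 1) - (A 1 1)*(B 0 1)*(C 0 0)*(D 1 0) + (A 1 1)*(B 0 0)*(C 0 0)*(D 1 1) - (A 1 0)*(B 1 1)*(C 0 1)*(D 0 0) + (A 1 0)*(B 1 0)*(C 0 1)*(D 0 1) - (A 1 0)*(B 0 1)*(C 0 0)*(D 0 0) + (A 1 0)*(B 0 0)*(C 0 0)*(D 0 1) + (A 0 1)*(B 1 1)*(C 1 1)*(D 1 0) - (A 0 1)*(B 1 0)*(C 1 1)*(D 1 1) + (A 0 1)*(B 0 1)*(C 1 0)*(D 1 0) - (A 0 1)*(B 0 0)*(C 1 0)*(D 1 1) + (A 0 0)*(B 1 1)*(C 1 1)*(D 0 0) - (A 0 0)*(B 1 0)*(C 1 1)*(D 0 1) + (A 0 0)*(B 0 1)*(C 1 0)*(D 0 0) - (A 0 0)*(B 0 0)*(C 1 0)*(D 0 1)) * h2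
end

section
/- Let F be a field of characteristic 2 and let q : (Fin 4 → F) → F be the quadratic form q(w) = Σ_{0≤i<j≤3} w_i·w_j (the second elementary symmetric polynomial in four variables). Then there exists an F-linear automorphism φ of Fin 4 → F such that q(φ(v)) = v₀² + v₀·v₁ + v₁² + v₂·v₃ for all v. That is, q is isometric to the orthogonal sum [1,1] ⊥ [0,0], where [a,b] denotes the binary quadratic form aX² + XY + bY². (The computation of the restriction of Srp to the split biquadratic étale algebra L, from the proof of Corollary comp.) -/
open Finset

noncomputable def fmap (F : Type*) [Field F] : (Fin 4 → F) →ₗ[F] (Fin 4 → F) where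
  toFun v := ![v 0, v 1, v 0 + v 1 + v 2, v 0 + v 1 + v 3]
  map_add' u v := by
    funext i
    fin_cases i <;> simp <;> ring
  map_smul' c v := by
    funext i
    fin_cases i <;> simp [Pi.smul_apply, smul_eq_mul] <;> ring

/-- In characteristic 2, the second elementary symmetric polynomial in four variables,
viewed as a quadratic form `q(w) = Σ_{0 ≤ i < j ≤ 3} wᵢ·wⱼ` on `F⁴`, is isometric to
`[1,1] ⊥ [0,0]`: there is a linear automorphism `φ` of `F⁴` with
`q(φ v) = v₀² + v₀v₁ + v₁² + v₂v₃` for all `v`. -/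
theorem stmt7 (F : Type*) [Field F] [CharP F 2] :
    ∃ φ : (Fin 4 → F) ≃ₗ[F] (Fin 4 → F),
      ∀ v : Fin 4 → F,
        (∑ p ∈ Finset.univ.filter (fun p : Fin 4 × Fin 4 => p.1 < p.2),
            (φ v) p.1 * (φ v) p.2)
          = v 0 ^ 2 + v 0 * v 1 + v 1 ^ 2 + v 2 * v 3 := by
  have h2 : (2 : F) = 0 := by
    have := CharP.cast_eq_zero F 2
    simpa using this
  have hinv : ∀ v : Fin 4 → F, fmap F (fmap F v) = v := by
    intro v
    funext i
    fin_cases i <;> simp [fmap] <;> linear_combination (v 0 + v 1) * h2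
  refine ⟨LinearEquiv.ofLinear (fmap F) (fmap F)
    (LinearMap.ext hinv) (LinearMap.ext hinv), ?_⟩
  intro v
  show (∑ p ∈ Finset.univ.filter (fun p : Fin 4 × Fin 4 => p.1 < p.2),
      (fmap F v) p.1 * (fmap F v) p.2) = _
  rw [show Finset.univ.filter (fun p : Fin 4 × Fin 4 => p.1 < p.2) =
      {(0,1),(0,2),(0,3),(1,2),(1,3),(2,3)} from by decide]
  simp [fmap, Finset.sum_insert, Finset.mem_insert]
  linear_combination (v 0 * v 2 + v 0 * v 3 + v 1 * v 2 + v 1 * v 3 + v 0 ^ 2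
    + v 1 ^ 2 + 3 * v 0 * v 1) * h2
end

section
/- Let F be a field of characteristic 2 and let Sym₄(F) = {x ∈ M₄(F) : xᵀ = x} be the space of symmetric 4×4 matrices. Define q : Sym₄(F) → F by q(x) = coefficient of X² in charpoly(x). Then there exists an F-linear bijection φ : (Fin 10 → F) → Sym₄(F) such that for every v: q(φ(v)) = v₀v₁ + v₂² + v₂v₃ + v₃² + v₄². In particular q is isometric to [0,0] ⊥ [1,1] ⊥ ⟨1,0,0,0,0,0⟩, the last six-dimensional summand being totally singular. (The orthogonal-involution theorem in the split case, for the transpose involution on M₄(F).) -/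
open Polynomial Matrix

/-- The space of symmetric 4×4 matrices over `F`, as an `F`-subspace of `M₄(F)`. -/
def sym4 (F : Type*) [Field F] : Submodule F (Matrix (Fin 4) (Fin 4) F) where
  carrier := {x | xᵀ = x}
  add_mem' := by
    intro a b ha hb
    simp only [Set.mem_setOf_eq, Matrix.transpose_add] at *
    rw [ha, hb]
  zero_mem' := by simp
  smul_mem' := by
    intro c x hx
    simp only [Set.mem_setOf_eq, Matrix.transpose_smul] at *
    rw [hx]

private lemma C_sq' {F : Type*} [Field F] (b : F) : (C b : F[X]) ^ 2 = C (b * b) := by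
  rw [pow_two, ← C_mul]

set_option maxHeartbeats 4000000 in
set_option maxRecDepth 40000 in
private lemma coeff2_sym {F : Type*} [Field F] (a b c d e f g h i j : F) :
    (!![a,e,f,g;e,b,h,i;f,h,c,j;g,i,j,d] : Matrix (Fin 4) (Fin 4) F).charpoly.coeff 2
      = a*b+a*c+a*d+b*c+b*d+c*d - e^2-f^2-g^2-h^2-i^2-j^2 := by
  have hc : charmatrix (!![a,e,f,g;e,b,h,i;f,h,c,j;g,i,j,d] : Matrix (Fin 4) (Fin 4) F)
      = !![X - C a, -C e, -C f, -C g;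
           -C e, X - C b, -C h, -C i;
           -C f, -C h, X - C c, -C j;
           -C g, -C i, -C j, X - C d] := by
    ext i j
    fin_cases i <;> fin_cases j <;>
      simp [charmatrix_apply_eq, charmatrix_apply_ne]
  rw [Matrix.charpoly, hc]
  simp [Matrix.det_succ_row_zero, Fin.sum_univ_succ, Matrix.det_fin_three,
    show (Fin.succAbove (1:Fin 4) 2) = 3 from rfl,
    show (Fin.succAbove (2:Fin 4) 2) = 3 from rfl,
    show (Fin.succAbove (3:Fin 4) 2) = 2 from rfl,
    show ((Fin.castSucc 2 : Fin 4)) = 2 from rfl]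
  ring_nf
  norm_num
  simp only [C_sq', coeff_X_pow, coeff_mul_C, coeff_C_mul, coeff_X, coeff_add,
    coeff_sub, coeff_C, coeff_one, coeff_mul_X_pow']
  norm_num
  ring

/-- The explicit symmetric matrix attached to `v : Fin 10 → F`. -/
private def toSym {F : Type*} [Field F] (v : Fin 10 → F) : Matrix (Fin 4) (Fin 4) F :=
  !![v 0+v 2+v 3, v 4+v 5+v 6+v 7+v 8+v 9, v 5, v 6;
     v 4+v 5+v 6+v 7+v 8+v 9, v 0+v 3, v 7, v 8;
     v 5, v 7, v 0+v 2, v 9;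
     v 6, v 8, v 9, v 0+v 1]

private lemma toSym_mem {F : Type*} [Field F] (v : Fin 10 → F) : toSym v ∈ sym4 F := by
  show (toSym v)ᵀ = toSym v
  ext i j
  fin_cases i <;> fin_cases j <;> rfl


private lemma vec10_val {α : Type*} (a0 a1 a2 a3 a4 a5 a6 a7 a8 a9 : α) :
    ![a0,a1,a2,a3,a4,a5,a6,a7,a8,a9] (4 : Fin 10) = a4 ∧
    ![a0,a1,a2,a3,a4,a5,a6,a7,a8,a9] (5 : Fin 10) = a5 ∧
    ![a0,a1,a2,a3,a4,a5,a6,a7,a8,a9] (6 : Fin 10) = a6 ∧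
    ![a0,a1,a2,a3,a4,a5,a6,a7,a8,a9] (7 : Fin 10) = a7 ∧
    ![a0,a1,a2,a3,a4,a5,a6,a7,a8,a9] (8 : Fin 10) = a8 ∧
    ![a0,a1,a2,a3,a4,a5,a6,a7,a8,a9] (9 : Fin 10) = a9 :=
  ⟨rfl, rfl, rfl, rfl, rfl, rfl⟩

private lemma vec10_4 {α : Type*} (a0 a1 a2 a3 a4 a5 a6 a7 a8 a9 : α) :
    ![a0,a1,a2,a3,a4,a5,a6,a7,a8,a9] (4 : Fin 10) = a4 := rfl
private lemma vec10_5 {α : Type*} (a0 a1 a2 a3 a4 a5 a6 a7 a8 a9 : α) :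
    ![a0,a1,a2,a3,a4,a5,a6,a7,a8,a9] (5 : Fin 10) = a5 := rfl
private lemma vec10_6 {α : Type*} (a0 a1 a2 a3 a4 a5 a6 a7 a8 a9 : α) :
    ![a0,a1,a2,a3,a4,a5,a6,a7,a8,a9] (6 : Fin 10) = a6 := rfl
private lemma vec10_7 {α : Type*} (a0 a1 a2 a3 a4 a5 a6 a7 a8 a9 : α) :
    ![a0,a1,a2,a3,a4,a5,a6,a7,a8,a9] (7 : Fin 10) = a7 := rfl
private lemma vec10_8 {α : Type*} (a0 a1 a2 a3 a4 a5 a6 a7 a8 a9 : α) :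
    ![a0,a1,a2,a3,a4,a5,a6,a7,a8,a9] (8 : Fin 10) = a8 := rfl
private lemma vec10_9 {α : Type*} (a0 a1 a2 a3 a4 a5 a6 a7 a8 a9 : α) :
    ![a0,a1,a2,a3,a4,a5,a6,a7,a8,a9] (9 : Fin 10) = a9 := rfl

set_option maxHeartbeats 1600000 in
/-- The second-trace form of the transpose involution on `M₄(F)` in characteristic 2:
the quadratic form `x ↦ coeff of X² in charpoly(x)` on the 10-dimensional space of
symmetric matrices is isometric to `[0,0] ⊥ [1,1] ⊥ ⟨1,0,0,0,0,0⟩`. -/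
theorem stmt10 (F : Type*) [Field F] [CharP F 2] :
    ∃ φ : (Fin 10 → F) ≃ₗ[F] sym4 F,
      ∀ v : Fin 10 → F,
        (((φ v : sym4 F) : Matrix (Fin 4) (Fin 4) F).charpoly).coeff 2
          = v 0 * v 1 + v 2 ^ 2 + v 2 * v 3 + v 3 ^ 2 + v 4 ^ 2 := by
  have h2 : (2 : F) = 0 := CharP.cast_eq_zero F 2
  refine ⟨{
    toFun := fun v => ⟨toSym v, toSym_mem v⟩
    map_add' := by
      intro v w
      apply Subtype.ext
      show toSym (v + w) = toSym v + toSym w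
      ext i j
      fin_cases i <;> fin_cases j <;> simp [toSym] <;> ring
    map_smul' := by
      intro c v
      apply Subtype.ext
      show toSym (c • v) = c • toSym v
      ext i j
      fin_cases i <;> fin_cases j <;> simp [toSym] <;> ring
    invFun := fun x =>
      ![(x : Matrix (Fin 4) (Fin 4) F) 0 0 + (x : Matrix (Fin 4) (Fin 4) F) 1 1
          + (x : Matrix (Fin 4) (Fin 4) F) 2 2,
        (x : Matrix (Fin 4) (Fin 4) F) 0 0 + (x : Matrix (Fin 4) (Fin 4) F) 1 1
          + (x : Matrix (Fin 4) (Fin 4) F) 2 2 + (x : Matrix (Fin 4) (Fin 4) F) 3 3,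
        (x : Matrix (Fin 4) (Fin 4) F) 0 0 + (x : Matrix (Fin 4) (Fin 4) F) 1 1,
        (x : Matrix (Fin 4) (Fin 4) F) 0 0 + (x : Matrix (Fin 4) (Fin 4) F) 2 2,
        (x : Matrix (Fin 4) (Fin 4) F) 0 1 + (x : Matrix (Fin 4) (Fin 4) F) 0 2
          + (x : Matrix (Fin 4) (Fin 4) F) 0 3 + (x : Matrix (Fin 4) (Fin 4) F) 1 2
          + (x : Matrix (Fin 4) (Fin 4) F) 1 3 + (x : Matrix (Fin 4) (Fin 4) F) 2 3,
        (x : Matrix (Fin 4) (Fin 4) F) 0 2,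
        (x : Matrix (Fin 4) (Fin 4) F) 0 3,
        (x : Matrix (Fin 4) (Fin 4) F) 1 2,
        (x : Matrix (Fin 4) (Fin 4) F) 1 3,
        (x : Matrix (Fin 4) (Fin 4) F) 2 3]
    left_inv := by
      intro v
      funext k
      fin_cases k <;> simp [toSym, vec10_4, vec10_5, vec10_6, vec10_7, vec10_8, vec10_9] <;>
        first
          | linear_combination (v 0 + v 2 + v 3) * h2
          | linear_combination (2 * v 0 + v 2 + v 3) * h2
          | linear_combination (v 0 + v 3) * h2
          | linear_combination (v 0 + v 2) * h2
          | linear_combination (v 5 + v 6 + v 7 + v 8 + v 9) * h2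
    right_inv := by
      rintro ⟨x, hx⟩
      have hs : ∀ i j : Fin 4, x j i = x i j := fun i j => (congrFun (congrFun hx j) i).symm
      apply Subtype.ext
      show toSym _ = x
      ext i j
      fin_cases i <;> fin_cases j <;> simp [toSym, vec10_4, vec10_5, vec10_6, vec10_7, vec10_8, vec10_9] <;>
        first
          | exact hs _ _
          | linear_combination (x 0 0 + x 1 1 + x 2 2) * h2
          | linear_combination (x 0 0 + x 2 2) * h2
          | linear_combination (x 0 0 + x 1 1) * h2
          | linear_combination (x 0 2 + x 0 3 + x 1 2 + x 1 3 + x 2 3) * h2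
          | linear_combination (x 0 2 + x 0 3 + x 1 2 + x 1 3 + x 2 3) * h2 + hs 0 1
          | linear_combination (x 0 2 + x 0 3 + x 1 2 + x 1 3 + x 2 3) * h2 - hs 0 1
  }, ?_⟩
  intro v
  show ((!![v 0+v 2+v 3, v 4+v 5+v 6+v 7+v 8+v 9, v 5, v 6;
     v 4+v 5+v 6+v 7+v 8+v 9, v 0+v 3, v 7, v 8;
     v 5, v 7, v 0+v 2, v 9;
     v 6, v 8, v 9, v 0+v 1] : Matrix (Fin 4) (Fin 4) F).charpoly).coeff 2 = _
  rw [coeff2_sym]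
  linear_combination ((3:F) * (v 0*v 0) + (v 0*v 1) + 3 * (v 0*v 2) + 3 * (v 0*v 3)
    + (v 1*v 2) + (v 1*v 3) + (v 2*v 3) - (v 4*v 4) - (v 4*v 5) - (v 4*v 6) - (v 4*v 7)
    - (v 4*v 8) - (v 4*v 9) - (v 5*v 5) - (v 5*v 6) - (v 5*v 7) - (v 5*v 8) - (v 5*v 9)
    - (v 6*v 6) - (v 6*v 7) - (v 6*v 8) - (v 6*v 9) - (v 7*v 7) - (v 7*v 8) - (v 7*v 9)
    - (v 8*v 8) - (v 8*v 9) - (v 9*v 9)) * h2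
end

section
/- Let F be a field of characteristic 2 and let x ∈ M₄(F) be a symmetric matrix (xᵀ = x) whose diagonal entries are all zero. Then the coefficient of X² in charpoly(x) equals (Σ_{0≤i<j≤3} x_{ij})². Consequently, the map x ↦ coefficient of X² in charpoly(x) is additive on the subspace of zero-diagonal symmetric matrices, i.e. this subspace is totally singular for that quadratic form. (The totally singular part of the second-trace form in the split orthogonal case.) -/
open Polynomial Matrix Finset

set_option maxHeartbeats 4000000 in
private lemma coeff2_aux (F : Type*) [Field F] (a b c d e f : F) :
    (!![0,a,b,c; a,0,d,e; b,d,0,f; c,e,f,0] : Matrix (Fin 4) (Fin 4) F).charpoly.coeff 2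
      = -(a^2+b^2+c^2+d^2+e^2+f^2) := by
  rw [Matrix.charpoly]
  simp only [Matrix.det_succ_row_zero, Fin.sum_univ_succ, charmatrix_apply, Matrix.one_apply,
    Matrix.submatrix_apply, Fin.succAbove, Matrix.cons_val', Matrix.cons_val_zero,
    Matrix.cons_val_one, Matrix.head_cons, Matrix.head_fin_const, Matrix.cons_val_fin_one,
    Fin.sum_univ_zero, Matrix.det_fin_zero]
  norm_num [Fin.lt_def, Fin.ext_iff, Matrix.one_apply, Matrix.diagonal_apply]
  ring_nf
  simp [coeff_ofNat_mul, coeff_X_pow, coeff_C_mul, coeff_C, coeff_X, coeff_one]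
  ring

private lemma matrix_eq_aux (F : Type*) [Field F] (x : Matrix (Fin 4) (Fin 4) F) (hs : xᵀ = x)
    (hd : ∀ i, x i i = 0) :
    x = !![0, x 0 1, x 0 2, x 0 3; x 0 1, 0, x 1 2, x 1 3;
           x 0 2, x 1 2, 0, x 2 3; x 0 3, x 1 3, x 2 3, 0] := by
  have h : ∀ i j, x j i = x i j := fun i j => by
    conv_lhs => rw [← hs]
    rfl
  ext i j
  fin_cases i <;> fin_cases j <;>
    simp [hd, h 0 1, h 0 2, h 0 3, h 1 2, h 1 3, h 2 3]

private lemma sum_aux (F : Type*) [Field F] (x : Matrix (Fin 4) (Fin 4) F) :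
    (∑ p ∈ Finset.univ.filter (fun p : Fin 4 × Fin 4 => p.1 < p.2), x p.1 p.2)
      = x 0 1 + x 0 2 + x 0 3 + x 1 2 + x 1 3 + x 2 3 := by
  rw [show (Finset.univ.filter (fun p : Fin 4 × Fin 4 => p.1 < p.2))
      = {(0,1),(0,2),(0,3),(1,2),(1,3),(2,3)} from by decide]
  simp [Finset.sum_insert, Finset.mem_insert]
  ring

private lemma key_aux (F : Type*) [Field F] [CharP F 2]
    (x : Matrix (Fin 4) (Fin 4) F) (hs : xᵀ = x) (hd : ∀ i, x i i = 0) :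
    x.charpoly.coeff 2
      = (∑ p ∈ Finset.univ.filter (fun p : Fin 4 × Fin 4 => p.1 < p.2), x p.1 p.2) ^ 2 := by
  rw [sum_aux]
  conv_lhs => rw [matrix_eq_aux F x hs hd]
  rw [coeff2_aux, CharTwo.neg_eq]
  simp only [CharTwo.add_sq]

/-- For a symmetric 4×4 matrix `x` with zero diagonal over a field of characteristic 2,
the coefficient of `X²` in the characteristic polynomial of `x` is
`(Σ_{0 ≤ i < j ≤ 3} x_{ij})²`; consequently this quadratic form is additive (totally
singular) on the subspace of zero-diagonal symmetric matrices. -/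
theorem stmt11 (F : Type*) [Field F] [CharP F 2] :
    (∀ x : Matrix (Fin 4) (Fin 4) F, xᵀ = x → (∀ i, x i i = 0) →
      x.charpoly.coeff 2
        = (∑ p ∈ Finset.univ.filter (fun p : Fin 4 × Fin 4 => p.1 < p.2), x p.1 p.2) ^ 2)
    ∧
    (∀ x y : Matrix (Fin 4) (Fin 4) F, xᵀ = x → (∀ i, x i i = 0) →
      yᵀ = y → (∀ i, y i i = 0) →
      (x + y).charpoly.coeff 2 = x.charpoly.coeff 2 + y.charpoly.coeff 2) := by
  refine ⟨fun x hs hd => key_aux F x hs hd, fun x y hxs hxd hys hyd => ?_⟩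
  have hs : (x + y)ᵀ = x + y := by rw [Matrix.transpose_add, hxs, hys]
  have hd : ∀ i, (x + y) i i = 0 := fun i => by
    simp [Matrix.add_apply, hxd i, hyd i]
  rw [key_aux F x hxs hxd, key_aux F y hys hyd, key_aux F (x + y) hs hd,
    ← CharTwo.add_sq]
  congr 1
  rw [← Finset.sum_add_distrib]
  rfl
end

section
/- Let A be an associative unital ring in which 2 = 0, and let x, y ∈ A satisfy: x² = 0; x commutes with y²; the element c := x·y + y·x commutes with x; and c is a unit of A with inverse c⁻¹. Then (x·((y² + 1)·c⁻¹) + y)² = 1. (The key computation in the proof that hyperbolicity of π₃ yields a decomposition of the algebra with involution: it replaces a square-zero element by one whose square is 1.) -/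
/-- In a ring with `2 = 0`: if `x² = 0`, `x` commutes with `y²`, the element
`c = xy + yx` commutes with `x` and is a unit with inverse `cinv`, then
`(x·((y² + 1)·c⁻¹) + y)² = 1`. -/
theorem stmt12 (A : Type*) [Ring A] (h2 : (2 : A) = 0) (x y cinv : A)
    (hx : x ^ 2 = 0)
    (hxy2 : x * y ^ 2 = y ^ 2 * x)
    (hcx : (x * y + y * x) * x = x * (x * y + y * x))
    (hc1 : (x * y + y * x) * cinv = 1)
    (hc2 : cinv * (x * y + y * x) = 1) :
    (x * ((y ^ 2 + 1) * cinv) + y) ^ 2 = 1 := by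
  set c := x * y + y * x with hcdef
  have htwo : ∀ a : A, a + a = 0 := fun a => by rw [← two_mul, h2, zero_mul]
  -- cinv commutes with x
  have hcinvx : cinv * x = x * cinv := by
    calc cinv * x = cinv * x * (c * cinv) := by rw [hc1, mul_one]
      _ = cinv * (x * c) * cinv := by noncomm_ring
      _ = cinv * (c * x) * cinv := by rw [← hcx]
      _ = (cinv * c) * (x * cinv) := by noncomm_ring
      _ = x * cinv := by rw [hc2, one_mul]
  -- c commutes with y
  have hcy : c * y = y * c := by
    have : x * y * y = y * y * x := by
      have := hxy2; rw [pow_two] at this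
      rw [mul_assoc, this]
    calc c * y = x * y * y + y * (x * y) := by rw [hcdef]; noncomm_ring
      _ = y * (x * y) + y * (y * x) := by rw [this]; noncomm_ring
      _ = y * c := by rw [hcdef]; noncomm_ring
  -- cinv commutes with y
  have hcinvy : cinv * y = y * cinv := by
    calc cinv * y = cinv * y * (c * cinv) := by rw [hc1, mul_one]
      _ = cinv * (y * c) * cinv := by noncomm_ring
      _ = cinv * (c * y) * cinv := by rw [← hcy]
      _ = (cinv * c) * (y * cinv) := by noncomm_ring
      _ = y * cinv := by rw [hc2, one_mul]
  set e := (y ^ 2 + 1) * cinv with hedef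
  -- x commutes with e
  have hxe : x * e = e * x := by
    have h1 : x * (y ^ 2 + 1) = (y ^ 2 + 1) * x := by
      rw [mul_add, add_mul, hxy2, mul_one, one_mul]
    calc x * e = (x * (y ^ 2 + 1)) * cinv := by rw [hedef, mul_assoc]
      _ = (y ^ 2 + 1) * (x * cinv) := by rw [h1, mul_assoc]
      _ = (y ^ 2 + 1) * (cinv * x) := by rw [hcinvx]
      _ = e * x := by rw [hedef, mul_assoc]
  -- y commutes with e
  have hye : y * e = e * y := by
    have h1 : y * (y ^ 2 + 1) = (y ^ 2 + 1) * y := by noncomm_ring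
    calc y * e = (y * (y ^ 2 + 1)) * cinv := by rw [hedef, mul_assoc]
      _ = (y ^ 2 + 1) * (y * cinv) := by rw [h1, mul_assoc]
      _ = (y ^ 2 + 1) * (cinv * y) := by rw [hcinvy]
      _ = e * y := by rw [hedef, mul_assoc]
  -- first term vanishes
  have t1 : (x * e) * (x * e) = 0 := by
    calc (x * e) * (x * e) = (e * x) * (x * e) := by rw [hxe]
      _ = e * (x ^ 2) * e := by rw [pow_two]; noncomm_ring
      _ = 0 := by rw [hx, mul_zero, zero_mul]
  -- cross terms
  have t2 : (x * e) * y + y * (x * e) = y ^ 2 + 1 := by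
    calc (x * e) * y + y * (x * e) = x * (e * y) + y * x * e := by noncomm_ring
      _ = x * (y * e) + y * x * e := by rw [hye]
      _ = c * e := by rw [hcdef]; noncomm_ring
      _ = (c * (y ^ 2 + 1)) * cinv := by rw [hedef, mul_assoc]
      _ = ((y ^ 2 + 1) * c) * cinv := by
            have hcy2 : c * y ^ 2 = y ^ 2 * c := by
              rw [pow_two, ← mul_assoc, hcy, mul_assoc, hcy, ← mul_assoc]
            rw [mul_add, add_mul, hcy2, mul_one]; noncomm_ring
      _ = (y ^ 2 + 1) * (c * cinv) := by rw [mul_assoc]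
      _ = y ^ 2 + 1 := by rw [hc1, mul_one]
  calc (x * e + y) ^ 2
      = (x * e) * (x * e) + ((x * e) * y + y * (x * e)) + y ^ 2 := by noncomm_ring
    _ = 0 + (y ^ 2 + 1) + y ^ 2 := by rw [t1, t2]
    _ = (y ^ 2 + y ^ 2) + 1 := by noncomm_ring
    _ = 1 := by rw [htwo, zero_add]
end

section
/- Let A be an associative unital ring in which 2 = 0, and let i₁, j₁, i₂, j₂ ∈ A satisfy: j₁·i₁ = (i₁ + 1)·j₁ and j₂·i₂ = (i₂ + 1)·j₂; j₁² and j₂² are central in A; and each of i₁, j₁ commutes with each of i₂, j₂. Put u = i₁, v = j₁·j₂, u' = i₁ + i₂, v' = j₂. Then: v·u = (u + 1)·v, v'·u' = (u' + 1)·v', v² = j₁²·j₂², and each of u, v commutes with each of u', v'. (The generator exchange producing a new pair of commuting quaternion subalgebras, the key computation in the implication (ii) ⇒ (iii) of the decomposability criterion.) -/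
/-- Generator exchange producing a new pair of commuting quaternion subalgebras in
characteristic 2: with `u = i₁`, `v = j₁j₂`, `u' = i₁ + i₂`, `v' = j₂`, the relations
`vu = (u+1)v`, `v'u' = (u'+1)v'`, `v² = j₁²j₂²` hold and each of `u`, `v` commutes with
each of `u'`, `v'`. -/
theorem stmt13 (A : Type*) [Ring A] (h2 : (2 : A) = 0) (i₁ j₁ i₂ j₂ : A)
    (hj1 : j₁ * i₁ = (i₁ + 1) * j₁)
    (hj2 : j₂ * i₂ = (i₂ + 1) * j₂)
    (hj1c : ∀ z : A, j₁ ^ 2 * z = z * j₁ ^ 2)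
    (hj2c : ∀ z : A, j₂ ^ 2 * z = z * j₂ ^ 2)
    (hii : i₁ * i₂ = i₂ * i₁) (hij : i₁ * j₂ = j₂ * i₁)
    (hji : j₁ * i₂ = i₂ * j₁) (hjj : j₁ * j₂ = j₂ * j₁) :
    (j₁ * j₂) * i₁ = (i₁ + 1) * (j₁ * j₂)
      ∧ j₂ * (i₁ + i₂) = ((i₁ + i₂) + 1) * j₂
      ∧ (j₁ * j₂) ^ 2 = j₁ ^ 2 * j₂ ^ 2
      ∧ (i₁ * (i₁ + i₂) = (i₁ + i₂) * i₁
          ∧ i₁ * j₂ = j₂ * i₁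
          ∧ (j₁ * j₂) * (i₁ + i₂) = (i₁ + i₂) * (j₁ * j₂)
          ∧ (j₁ * j₂) * j₂ = j₂ * (j₁ * j₂)) := by
  have h1 : j₁ * j₂ * i₁ = (i₁ + 1) * (j₁ * j₂) := by
    rw [mul_assoc, ← hij, ← mul_assoc, hj1, mul_assoc]
  refine ⟨h1, ?_, ?_, ?_, hij, ?_, ?_⟩
  · rw [mul_add, ← hij, hj2]; noncomm_ring
  · calc (j₁ * j₂) ^ 2 = j₁ * (j₂ * j₁) * j₂ := by noncomm_ring
      _ = j₁ ^ 2 * j₂ ^ 2 := by rw [← hjj]; noncomm_ring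
  · rw [mul_add, add_mul, hii]
  · have h2' : j₁ * j₂ * i₂ = (i₂ + 1) * (j₁ * j₂) := by
      rw [mul_assoc, hj2,
        show j₁ * ((i₂ + 1) * j₂) = (j₁ * i₂) * j₂ + j₁ * j₂ by noncomm_ring, hji]
      noncomm_ring
    rw [mul_add, h1, h2']
    have hz : (2 : A) * (j₁ * j₂) = 0 := by rw [h2, zero_mul]
    have : (i₁ + 1) * (j₁ * j₂) + (i₂ + 1) * (j₁ * j₂)
        = (i₁ + i₂) * (j₁ * j₂) + 2 * (j₁ * j₂) := by noncomm_ring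
    rw [this, hz, add_zero]
  · rw [hjj, mul_assoc, hjj]
end

section
/- Let F be a field of characteristic 2, A an associative unital F-algebra, and y, ℓ ∈ A elements satisfying y·ℓ + ℓ·y = y and y²·ℓ = ℓ·y². If s, u, n ∈ F are scalars such that y⁴ + s·y² + u·y + n·1 = 0, then u·y = 0; consequently y⁴ + s·y² + n·1 = 0. (The key step in the proof of the hyperbolicity criterion for π₅, showing that the degree-one coefficient of the reduced Pfaffian polynomial annihilates y.) -/
/-- Key step in the hyperbolicity criterion for `π₅`: in an algebra over a field of
characteristic 2, if `yℓ + ℓy = y`, `y²ℓ = ℓy²` and `y⁴ + s·y² + u·y + n·1 = 0` with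
scalars `s`, `u`, `n`, then `u·y = 0` and hence `y⁴ + s·y² + n·1 = 0`. -/
theorem stmt14 (F : Type*) [Field F] [CharP F 2]
    (A : Type*) [Ring A] [Algebra F A] (y ℓ : A)
    (h1 : y * ℓ + ℓ * y = y)
    (h2 : y ^ 2 * ℓ = ℓ * y ^ 2)
    (s u n : F)
    (heq : y ^ 4 + s • y ^ 2 + u • y + n • (1 : A) = 0) :
    u • y = 0 ∧ y ^ 4 + s • y ^ 2 + n • (1 : A) = 0 := by
  have htwo : (2 : F) = 0 := by exact_mod_cast CharP.cast_eq_zero F 2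
  have h2n : ∀ a : A, (2 : ℤ) • a = 0 := fun a => by
    rw [two_zsmul, ← two_smul F a, htwo, zero_smul]
  have h4 : y ^ 4 * ℓ = ℓ * y ^ 4 := by
    rw [show (4 : ℕ) = 2 + 2 from rfl, pow_add, mul_assoc, h2, ← mul_assoc, h2, mul_assoc]
  have key : u • y = 0 := by
    have e := congrArg (fun x : A => x * ℓ + ℓ * x) heq
    simp only [add_mul, mul_add, smul_mul_assoc, mul_smul_comm, one_mul, mul_one,
      zero_mul, mul_zero, add_zero] at e
    rw [h4, h2] at e
    abel_nf at e
    simp only [h2n, zero_add, add_zero] at e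
    rw [← smul_add, h1] at e
    exact e
  refine ⟨key, ?_⟩
  rw [key, add_zero] at heq
  exact heq
end
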